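/- arXiv:1606.07652 — 3 statements merged into one kernel-verified Lean document; each statement's English description precedes it below -/
import Mathlib

section
/- Let X = {x_1, …, x_N} ⊂ ℝ be points with separation distance q := (1/2) min_{j≠k} |x_j − x_k| > 0, and let σ = 2π/q. Then for every j, ∑_{k≠j} sinc²(σ(x_j − x_k)/2) ≤ 2π²/(σq)² = 1/2, where sinc(t) = sin(t)/t. -/
open Real

noncomputable def sinc (t : ℝ) : ℝ := if t = 0 then 1 else Real.sin t / t

/-! Since `sinc² t ≤ 1 / t²` and `σ / 2 = π / q`, it suffices to bound `∑ 1 / (x_j - x_k)²`.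
Rescaled by `2q`, the points `x_k - x_j` on either side of `0` are at least `1` apart and at least
`1` away from `0`, so their integer parts are distinct positive integers below them in absolute
value; each side therefore contributes at most `∑ 1 / n² = π² / 6`. -/

open Finset

lemma sinc_sq_le_one_div_sq {t : ℝ} (ht : t ≠ 0) : _root_.sinc t ^ 2 ≤ 1 / t ^ 2 := by
  rw [_root_.sinc, if_neg ht, div_pow]
  exact div_le_div_of_nonneg_right (sin_sq_le_one t) (sq_nonneg t)

lemma sum_one_div_sq_le_of_one_le {ι : Type*} (S : Finset ι) (y : ι → ℝ)
    (hsep : (S : Set ι).Pairwise fun a b => 1 ≤ |y a - y b|) (hy : ∀ k ∈ S, 1 ≤ y k) :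
    ∑ k ∈ S, 1 / y k ^ 2 ≤ π ^ 2 / 6 := by
  have hy0 : ∀ k ∈ S, 0 ≤ y k := fun k hk => zero_le_one.trans (hy k hk)
  have hinj : Set.InjOn (fun k => ⌊y k⌋₊) S := by
    intro a ha b hb hab
    by_contra hne
    refine (hsep ha hb hne).not_gt (Int.abs_sub_lt_one_of_floor_eq_floor ?_)
    rw [← Int.natCast_floor_eq_floor (hy0 a ha), ← Int.natCast_floor_eq_floor (hy0 b hb)]
    exact congrArg Nat.cast hab
  calc ∑ k ∈ S, 1 / y k ^ 2 ≤ ∑ k ∈ S, 1 / (⌊y k⌋₊ : ℝ) ^ 2 := by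
        refine sum_le_sum fun k hk => one_div_le_one_div_of_le ?_ ?_
        · have : 0 < ⌊y k⌋₊ := Nat.floor_pos.mpr (hy k hk)
          positivity
        · exact pow_le_pow_left₀ (Nat.cast_nonneg _) (Nat.floor_le (hy0 k hk)) 2
    _ = ∑ n ∈ S.image (fun k => ⌊y k⌋₊), 1 / (n : ℝ) ^ 2 :=
        (sum_image (f := fun n : ℕ => 1 / (n : ℝ) ^ 2) hinj).symm
    _ ≤ π ^ 2 / 6 := sum_le_hasSum _ (fun _ _ => by positivity) hasSum_zeta_two

lemma sum_one_div_sq_le_of_one_le_abs {ι : Type*} (S : Finset ι) (y : ι → ℝ)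
    (hsep : (S : Set ι).Pairwise fun a b => 1 ≤ |y a - y b|) (hy : ∀ k ∈ S, 1 ≤ |y k|) :
    ∑ k ∈ S, 1 / y k ^ 2 ≤ π ^ 2 / 3 := by
  classical
  rw [← sum_filter_add_sum_filter_not S (fun k => 0 < y k)]
  have hpos := sum_one_div_sq_le_of_one_le (S.filter (0 < y ·)) y
    (hsep.mono (coe_subset.mpr (filter_subset _ S))) fun k hk => by
      rw [mem_filter] at hk
      exact (abs_of_pos hk.2).symm ▸ hy k hk.1
  have hneg := sum_one_div_sq_le_of_one_le (S.filter (¬ 0 < y ·)) (-y)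
    ((hsep.mono (coe_subset.mpr (filter_subset _ S))).imp fun {a b} h => by
      rwa [Pi.neg_apply, Pi.neg_apply, neg_sub_neg, abs_sub_comm]) fun k hk => by
      rw [mem_filter, not_lt] at hk
      rw [Pi.neg_apply, ← abs_of_nonpos hk.2]; exact hy k hk.1
  simp only [Pi.neg_apply, neg_sq] at hneg
  linarith

lemma sum_one_div_sq_sub_le {ι : Type*} (S : Finset ι) (z : ι → ℝ) (c : ℝ) {d : ℝ} (hd : 0 < d)
    (hsep : (S : Set ι).Pairwise fun a b => d ≤ |z a - z b|) (hc : ∀ k ∈ S, d ≤ |c - z k|) :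
    ∑ k ∈ S, 1 / (c - z k) ^ 2 ≤ π ^ 2 / (3 * d ^ 2) := by
  have hscaled := sum_one_div_sq_le_of_one_le_abs S (fun k => (c - z k) / d)
    (hsep.imp fun {a b} h => by
      rw [← sub_div, sub_sub_sub_cancel_left, abs_div, abs_of_pos hd, one_le_div hd, abs_sub_comm]
      exact h)
    fun k hk => by rw [abs_div, abs_of_pos hd, one_le_div hd]; exact hc k hk
  simp only [div_pow, one_div_div] at hscaled
  calc ∑ k ∈ S, 1 / (c - z k) ^ 2 = (∑ k ∈ S, d ^ 2 / (c - z k) ^ 2) / d ^ 2 := by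
        rw [sum_div]; exact sum_congr rfl fun k _ => by field_simp
    _ ≤ π ^ 2 / 3 / d ^ 2 := by gcongr
    _ = π ^ 2 / (3 * d ^ 2) := by rw [div_div]

theorem stmt_8 (N : ℕ) (hN : 1 < N) (x : Fin N → ℝ)
    (q : ℝ) (hq0 : 0 < q)
    (hq : q = (1 / 2) *
      (Finset.univ.offDiag.inf'
        (by
          obtain ⟨a, b, hab⟩ := Fintype.exists_pair_of_one_lt_card
            (by simpa using hN) (α := Fin N)
          exact ⟨(a, b), Finset.mem_offDiag.mpr ⟨Finset.mem_univ _, Finset.mem_univ _, hab⟩⟩)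
        (fun p => |x p.1 - x p.2|)))
    (σ : ℝ) (hσ : σ = 2 * π / q) :
    ∀ j, (∑ k ∈ Finset.univ.erase j, (_root_.sinc (σ * (x j - x k) / 2)) ^ 2)
        ≤ 2 * π ^ 2 / (σ * q) ^ 2 ∧ 2 * π ^ 2 / (σ * q) ^ 2 = 1 / 2 := by
  intro j
  have hσ0 : σ ≠ 0 := by rw [hσ]; positivity
  have hsep : ∀ a b, a ≠ b → 2 * q ≤ |x a - x b| := fun a b hab => by
    rw [hq, ← mul_assoc, mul_one_div_cancel two_ne_zero, one_mul]
    exact inf'_le (fun p : Fin N × Fin N => |x p.1 - x p.2|) (b := (a, b))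
      (mem_offDiag.mpr ⟨mem_univ a, mem_univ b, hab⟩)
  have hpacking := sum_one_div_sq_sub_le (univ.erase j) x (x j) (by positivity : 0 < 2 * q)
    (fun a _ b _ hab => hsep a b hab) fun k hk => hsep j k (ne_of_mem_erase hk).symm
  refine ⟨?_, by rw [hσ]; field_simp⟩
  calc ∑ k ∈ univ.erase j, _root_.sinc (σ * (x j - x k) / 2) ^ 2
      ≤ ∑ k ∈ univ.erase j, (2 / σ) ^ 2 * (1 / (x j - x k) ^ 2) := by
        refine sum_le_sum fun k hk => ?_
        have hne : x j - x k ≠ 0 := by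
          have := hsep j k (ne_of_mem_erase hk).symm
          intro h; rw [h, abs_zero] at this; linarith
        exact (sinc_sq_le_one_div_sq (by positivity)).trans_eq (by field_simp)
    _ = (2 / σ) ^ 2 * ∑ k ∈ univ.erase j, 1 / (x j - x k) ^ 2 := (mul_sum _ _ _).symm
    _ ≤ (2 / σ) ^ 2 * (π ^ 2 / (3 * (2 * q) ^ 2)) := by gcongr
    _ = π ^ 2 / (3 * (σ * q) ^ 2) := by field_simp
    _ ≤ 2 * π ^ 2 / (σ * q) ^ 2 := by
        rw [← div_div]
        gcongr
        linarith [sq_nonneg π]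
end

section
/- Let Φ: ℝ → ℝ be continuous and integrable with Fourier transform Φ̂ ≥ 0, and suppose Φ̂ is nonincreasing on [0, σ] and even. Let Φ_σ(x) = (2π)^{-1}∫_{-σ}^{σ} Φ̂(ξ)e^{iξx}dξ. Then for all λ ∈ ℝ^N and points x_1,…,x_N, ∑_{j,k} λ_j λ_k Φ_σ(x_j − x_k) ≥ (σ/(2π)) Φ̂(σ) ∑_{j,k} λ_j λ_k sinc²(σ(x_j − x_k)/2). -/
open Real MeasureTheory

/-!
Both quadratic forms are integrals over `[-σ, σ]` of a weight against the nonnegative function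
`ξ ↦ |∑ⱼ λⱼ e^{iξxⱼ}|²`: the weight `Phat` for `Φσ`, and the Fejér weight `1 - |ξ|/σ` for the
`sinc²` form, since `∫_{-σ}^{σ} (1 - |ξ|/σ) e^{iξt} dξ = σ sinc²(σt/2)`. As `Phat` is even and
nonincreasing on `[0, σ]`, it dominates `Phat σ · (1 - |ξ|/σ)` there.
-/

noncomputable def expSum {ι : Type*} [Fintype ι] (lam x : ι → ℝ) (ξ : ℝ) : ℂ :=
  ∑ j, (lam j : ℂ) * Complex.exp (Complex.I * ξ * x j)

theorem IntervalIntegrable.ofReal {𝕜 : Type*} [RCLike 𝕜] {f : ℝ → ℝ} {μ : Measure ℝ} {a b : ℝ}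
    (hf : IntervalIntegrable f μ a b) : IntervalIntegrable (fun x => (f x : 𝕜)) μ a b :=
  ⟨hf.1.ofReal, hf.2.ofReal⟩

section QuadraticForm

variable {ι : Type*} [Fintype ι] (lam x : ι → ℝ)

@[fun_prop]
theorem continuous_expSum : Continuous (expSum lam x) := by
  unfold expSum
  fun_prop

theorem sum_sum_mul_exp_eq_normSq_expSum (ξ : ℝ) :
    ∑ j, ∑ k, (lam j * lam k : ℂ) * Complex.exp (Complex.I * ξ * (x j - x k)) =
      Complex.normSq (expSum lam x ξ) := by
  rw [← Complex.mul_conj, expSum, map_sum, Finset.sum_mul_sum]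
  refine Finset.sum_congr rfl fun j _ => Finset.sum_congr rfl fun k _ => ?_
  rw [map_mul, Complex.conj_ofReal, ← Complex.exp_conj, mul_mul_mul_comm, ← Complex.exp_add]
  simp only [map_mul, Complex.conj_I, Complex.conj_ofReal]
  ring_nf

theorem sum_sum_mul_eq_integral_mul_normSq_expSum {w g : ℝ → ℝ} {a b c : ℝ}
    (hw : IntervalIntegrable w volume a b)
    (hg : ∀ t : ℝ, (g t : ℂ) = c * ∫ ξ in a..b, (w ξ : ℂ) * Complex.exp (Complex.I * ξ * t)) :
    ∑ j, ∑ k, lam j * lam k * g (x j - x k) =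
      c * ∫ ξ in a..b, w ξ * Complex.normSq (expSum lam x ξ) := by
  have hint (t : ℝ) :
      IntervalIntegrable (fun ξ : ℝ => (w ξ : ℂ) * Complex.exp (Complex.I * ξ * t)) volume a b :=
    hw.ofReal.mul_continuousOn (by fun_prop)
  have hswap : ∫ ξ in a..b, ((w ξ * Complex.normSq (expSum lam x ξ) : ℝ) : ℂ) =
      ∑ j, ∑ k, (lam j * lam k : ℂ) *
        ∫ ξ in a..b, (w ξ : ℂ) * Complex.exp (Complex.I * ξ * (x j - x k : ℝ)) := by
    have hpointwise (ξ : ℝ) : ((w ξ * Complex.normSq (expSum lam x ξ) : ℝ) : ℂ) =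
        ∑ j, ∑ k, (lam j * lam k : ℂ) *
          ((w ξ : ℂ) * Complex.exp (Complex.I * ξ * (x j - x k : ℝ))) := by
      rw [Complex.ofReal_mul, ← sum_sum_mul_exp_eq_normSq_expSum, Finset.mul_sum]
      refine Finset.sum_congr rfl fun j _ => ?_
      rw [Finset.mul_sum]
      refine Finset.sum_congr rfl fun k _ => ?_
      push_cast
      ring
    simp_rw [hpointwise]
    rw [intervalIntegral.integral_finsetSum fun j _ => by
      simpa only [Finset.sum_fn] using IntervalIntegrable.sum _ fun k _ => (hint _).const_mul _]
    refine Finset.sum_congr rfl fun j _ => ?_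
    rw [intervalIntegral.integral_finsetSum fun k _ => (hint _).const_mul _]
    simp_rw [intervalIntegral.integral_const_mul]
  apply Complex.ofReal_injective
  rw [Complex.ofReal_mul, ← intervalIntegral.integral_ofReal, hswap, Finset.mul_sum]
  push_cast
  refine Finset.sum_congr rfl fun j _ => ?_
  rw [Finset.mul_sum]
  refine Finset.sum_congr rfl fun k _ => ?_
  rw [← Complex.ofReal_sub, hg]
  push_cast
  ring

end QuadraticForm

section EvenFunction

variable {f : ℝ → ℝ} {σ : ℝ}

theorem IntervalIntegrable.neg_of_even (heven : ∀ ξ, f (-ξ) = f ξ)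
    (hf : IntervalIntegrable f volume 0 σ) : IntervalIntegrable f volume (-σ) 0 := by
  have h := (IntervalIntegrable.iff_comp_neg (f := f)).mp hf
  simp only [heven, neg_zero] at h
  exact h.symm

theorem intervalIntegrable_of_even_of_antitoneOn (hσ : 0 ≤ σ) (heven : ∀ ξ, f (-ξ) = f ξ)
    (hmono : AntitoneOn f (Set.Icc 0 σ)) : IntervalIntegrable f volume (-σ) σ := by
  have hright : IntervalIntegrable f volume 0 σ :=
    (Set.uIcc_of_le hσ ▸ hmono).intervalIntegrable
  exact (hright.neg_of_even heven).trans hright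

theorem mul_one_sub_abs_div_le_of_even_of_antitoneOn (hf : 0 ≤ f σ) (heven : ∀ ξ, f (-ξ) = f ξ)
    (hmono : AntitoneOn f (Set.Icc 0 σ)) {ξ : ℝ} (hξ : ξ ∈ Set.Icc (-σ) σ) :
    f σ * (1 - |ξ| / σ) ≤ f ξ := by
  have habs : |ξ| ≤ σ := abs_le.2 hξ
  have hσ : 0 ≤ σ := (abs_nonneg ξ).trans habs
  have hf_abs : f |ξ| = f ξ := by
    rcases abs_choice ξ with h | h <;> simp [h, heven]
  calc f σ * (1 - |ξ| / σ) ≤ f σ :=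
        mul_le_of_le_one_right hf (sub_le_self _ (div_nonneg (abs_nonneg ξ) hσ))
    _ ≤ f |ξ| := hmono ⟨abs_nonneg ξ, habs⟩ ⟨hσ, le_rfl⟩ habs
    _ = f ξ := hf_abs

theorem mul_integral_one_sub_abs_div_mul_le_integral_mul (hσ : 0 ≤ σ) (hf : 0 ≤ f σ)
    (heven : ∀ ξ, f (-ξ) = f ξ) (hmono : AntitoneOn f (Set.Icc 0 σ)) {Q : ℝ → ℝ}
    (hQ : ContinuousOn Q (Set.uIcc (-σ) σ)) (hQ_nonneg : ∀ ξ, 0 ≤ Q ξ) :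
    f σ * ∫ ξ in (-σ)..σ, (1 - |ξ| / σ) * Q ξ ≤ ∫ ξ in (-σ)..σ, f ξ * Q ξ := by
  rw [← intervalIntegral.integral_const_mul]
  refine intervalIntegral.integral_mono_on (by linarith)
    (((Continuous.intervalIntegrable (by fun_prop) _ _).mul_continuousOn hQ).const_mul _)
    ((intervalIntegrable_of_even_of_antitoneOn hσ heven hmono).mul_continuousOn hQ)
    fun ξ hξ => ?_
  rw [← mul_assoc]
  exact mul_le_mul_of_nonneg_right
    (mul_one_sub_abs_div_le_of_even_of_antitoneOn hf heven hmono hξ) (hQ_nonneg ξ)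

theorem integral_mul_exp_eq_two_mul_integral_mul_cos (heven : ∀ ξ, f (-ξ) = f ξ)
    (hf : IntervalIntegrable f volume 0 σ) (t : ℝ) :
    ∫ ξ in (-σ)..σ, (f ξ : ℂ) * Complex.exp (Complex.I * ξ * t) =
      ((2 * ∫ ξ in 0..σ, f ξ * Real.cos (ξ * t) : ℝ) : ℂ) := by
  have hint {a b : ℝ} {g : ℝ → ℂ} (h : IntervalIntegrable f volume a b) (hg : Continuous g) :
      IntervalIntegrable (fun ξ : ℝ => (f ξ : ℂ) * g ξ) volume a b :=
    h.ofReal.mul_continuousOn hg.continuousOn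
  have hneg : ∫ ξ in (-σ)..0, (f ξ : ℂ) * Complex.exp (Complex.I * ξ * t) =
      ∫ ξ in 0..σ, (f ξ : ℂ) * Complex.exp (-(Complex.I * t) * ξ) := by
    rw [← neg_zero, ← intervalIntegral.integral_comp_neg, neg_zero]
    refine intervalIntegral.integral_congr fun ξ _ => ?_
    simp only [heven, Complex.ofReal_neg]
    ring_nf
  rw [← intervalIntegral.integral_add_adjacent_intervals (b := 0)
    (hint (hf.neg_of_even heven) (by fun_prop)) (hint hf (by fun_prop)), hneg,
    ← intervalIntegral.integral_add (hint hf (by fun_prop)) (hint hf (by fun_prop)),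
    ← intervalIntegral.integral_const_mul, ← intervalIntegral.integral_ofReal]
  refine intervalIntegral.integral_congr fun ξ _ => ?_
  push_cast
  rw [mul_left_comm, Complex.two_cos]
  ring_nf

end EvenFunction

theorem integral_one_sub_div_mul_cos {σ : ℝ} (hσ : σ ≠ 0) (t : ℝ) :
    ∫ ξ in 0..σ, (1 - ξ / σ) * Real.cos (ξ * t) = σ / 2 * _root_.sinc (σ * t / 2) ^ 2 := by
  rcases eq_or_ne t 0 with rfl | ht
  · simp only [mul_zero, Real.cos_zero, mul_one, zero_div, _root_.sinc, if_true, one_pow]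
    rw [intervalIntegral.integral_sub intervalIntegrable_const
      (Continuous.intervalIntegrable (by fun_prop : Continuous fun ξ : ℝ => ξ / σ) 0 σ),
      intervalIntegral.integral_div, integral_id, intervalIntegral.integral_const]
    field_simp
    ring
  have hst : σ * t / 2 ≠ 0 := by positivity
  -- an antiderivative, found by integrating by parts
  have hderiv : ∀ ξ ∈ Set.uIcc 0 σ, HasDerivAt
      (fun ξ => (1 - ξ / σ) * Real.sin (ξ * t) / t - Real.cos (ξ * t) / (σ * t ^ 2))
      ((1 - ξ / σ) * Real.cos (ξ * t)) ξ := by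
    intro ξ _
    have hlin : HasDerivAt (fun ξ : ℝ => ξ * t) t ξ := by
      simpa using (hasDerivAt_id ξ).mul_const t
    have := (((((hasDerivAt_id ξ).div_const σ).const_sub 1).mul hlin.sin).div_const t).sub
      (hlin.cos.div_const (σ * t ^ 2))
    refine this.congr_deriv ?_
    simp only [id]
    field_simp
    ring
  rw [intervalIntegral.integral_eq_sub_of_hasDerivAt hderiv
    (Continuous.intervalIntegrable (by fun_prop) 0 σ), _root_.sinc,
    if_neg hst, div_pow, Real.sin_sq_eq_half_sub, show 2 * (σ * t / 2) = σ * t by ring]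
  simp only [zero_div, sub_zero, zero_mul, Real.sin_zero, mul_zero, Real.cos_zero, div_self hσ,
    sub_self]
  field_simp
  ring

theorem integral_one_sub_abs_div_mul_exp {σ : ℝ} (hσ : 0 < σ) (t : ℝ) :
    ∫ ξ in (-σ)..σ, ((1 - |ξ| / σ : ℝ) : ℂ) * Complex.exp (Complex.I * ξ * t) =
      ((σ * _root_.sinc (σ * t / 2) ^ 2 : ℝ) : ℂ) := by
  rw [integral_mul_exp_eq_two_mul_integral_mul_cos (f := fun ξ => 1 - |ξ| / σ)
    (by simp [abs_neg]) (Continuous.intervalIntegrable (by fun_prop) 0 σ)]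
  have hcongr : ∫ ξ in 0..σ, (1 - |ξ| / σ) * Real.cos (ξ * t) =
      ∫ ξ in 0..σ, (1 - ξ / σ) * Real.cos (ξ * t) :=
    intervalIntegral.integral_congr fun ξ hξ => by
      rw [Set.uIcc_of_le hσ.le] at hξ
      simp only [abs_of_nonneg hξ.1]
  rw [hcongr, integral_one_sub_div_mul_cos hσ.ne']
  push_cast
  ring

theorem stmt_9_general
    (Phat : ℝ → ℝ)
    (hnonneg : ∀ ξ, 0 ≤ Phat ξ) (heven : ∀ ξ, Phat (-ξ) = Phat ξ)
    (σ : ℝ) (hσ : 0 < σ) (hmono : AntitoneOn Phat (Set.Icc 0 σ))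
    (Φσ : ℝ → ℝ)
    (hΦσ : ∀ x : ℝ, (Φσ x : ℂ) =
      (1 / (2 * (π : ℂ))) * ∫ ξ in (-σ)..σ, (Phat ξ : ℂ) * Complex.exp (Complex.I * ξ * x))
    (N : ℕ) (lam : Fin N → ℝ) (x : Fin N → ℝ) :
    (∑ j, ∑ k, lam j * lam k * Φσ (x j - x k))
      ≥ (σ / (2 * π)) * Phat σ *
        ∑ j, ∑ k, lam j * lam k * (_root_.sinc (σ * (x j - x k) / 2)) ^ 2 := by
  set Q : ℝ → ℝ := fun ξ => Complex.normSq (expSum lam x ξ)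
  have hΦσ_form : ∑ j, ∑ k, lam j * lam k * Φσ (x j - x k) =
      1 / (2 * π) * ∫ ξ in (-σ)..σ, Phat ξ * Q ξ :=
    sum_sum_mul_eq_integral_mul_normSq_expSum lam x
      (intervalIntegrable_of_even_of_antitoneOn hσ.le heven hmono)
      fun t => by rw [hΦσ]; push_cast; rfl
  have hsinc_form : ∑ j, ∑ k, lam j * lam k * _root_.sinc (σ * (x j - x k) / 2) ^ 2 =
      σ⁻¹ * ∫ ξ in (-σ)..σ, (1 - |ξ| / σ) * Q ξ :=
    sum_sum_mul_eq_integral_mul_normSq_expSum lam x (g := fun t => _root_.sinc (σ * t / 2) ^ 2)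
      (c := σ⁻¹) (Continuous.intervalIntegrable (by fun_prop) _ _) fun t => by
        rw [integral_one_sub_abs_div_mul_exp hσ, ← Complex.ofReal_mul, inv_mul_cancel_left₀ hσ.ne']
  have hcompare := mul_integral_one_sub_abs_div_mul_le_integral_mul (Q := Q) hσ.le (hnonneg σ)
    heven hmono (Complex.continuous_normSq.comp (continuous_expSum lam x)).continuousOn
    fun ξ => Complex.normSq_nonneg _
  rw [ge_iff_le, hΦσ_form, hsinc_form]
  calc σ / (2 * π) * Phat σ * (σ⁻¹ * ∫ ξ in (-σ)..σ, (1 - |ξ| / σ) * Q ξ)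
      = 1 / (2 * π) * (Phat σ * ∫ ξ in (-σ)..σ, (1 - |ξ| / σ) * Q ξ) := by field_simp
    _ ≤ 1 / (2 * π) * ∫ ξ in (-σ)..σ, Phat ξ * Q ξ := by gcongr

theorem stmt_9 (Φ : ℝ → ℝ) (hcont : Continuous Φ) (hint : Integrable Φ)
    (Phat : ℝ → ℝ)
    (hFT : ∀ ξ : ℝ, (Phat ξ : ℂ) = ∫ x : ℝ, (Φ x : ℂ) * Complex.exp (-(Complex.I * ξ * x)))
    (hnonneg : ∀ ξ, 0 ≤ Phat ξ) (heven : ∀ ξ, Phat (-ξ) = Phat ξ)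
    (σ : ℝ) (hσ : 0 < σ) (hmono : AntitoneOn Phat (Set.Icc 0 σ))
    (Φσ : ℝ → ℝ)
    (hΦσ : ∀ x : ℝ, (Φσ x : ℂ) =
      (1 / (2 * (π : ℂ))) * ∫ ξ in (-σ)..σ, (Phat ξ : ℂ) * Complex.exp (Complex.I * ξ * x))
    (N : ℕ) (lam : Fin N → ℝ) (x : Fin N → ℝ) :
    (∑ j, ∑ k, lam j * lam k * Φσ (x j - x k))
      ≥ (σ / (2 * π)) * Phat σ *
        ∑ j, ∑ k, lam j * lam k * (_root_.sinc (σ * (x j - x k) / 2)) ^ 2 :=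
  stmt_9_general Phat hnonneg heven σ hσ hmono Φσ hΦσ N lam x
end

section
/- Let X = {x_1,…,x_N} ⊂ ℝ with separation distance q > 0 and let Φ satisfy the hypotheses guaranteeing ∑_{j,k}λ_jλ_kΦ_σ(x_j−x_k) ≥ γ_min‖λ‖₂² with γ_min = q^{-1}Φ̂(2π/q), where additionally c₁(1+|ξ|²)^{-τ} ≤ Φ̂(ξ) ≤ c₂(1+|ξ|²)^{-τ} for some τ > 1/2 and constants 0 < c₁ ≤ c₂. If moreover the points lie in a bounded set so that N ≤ C h^{-1} for the mesh norm h and h is comparable to q, then the condition number of the matrix A = (Φ_σ(x_j − x_k)) satisfies cond(A) ≤ c q^{-2τ} for a constant c independent of X. -/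
/-!
Since `A` is positive semidefinite, `γ_max ≤ tr A = N Φ_σ(0)`, and
`Φ_σ(0) = (2π)⁻¹ ∫_{-σ}^{σ} Φ̂ ≤ (2π)⁻¹ c₂ ∫_ℝ (1 + ξ²)^{-τ}`, which is finite because `2τ > 1`.
The lower bound on the quadratic form gives `γ_min ≥ q⁻¹ c₁ (1 + σ²)^{-τ}`. With
`N ≤ C / h ≤ C / (c₃ q)` the powers of `q` cancel and `cond(A) ≲ (1 + (2π / q)²)^τ ≲ q^{-2τ}`;
the last step needs `q` bounded, which holds because `N ≥ 1` forces `c₃ q ≤ h ≤ C`.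
-/

open Real MeasureTheory

namespace Matrix

variable {n : Type*} [Fintype n] [DecidableEq n] {A : Matrix n n ℝ}

theorem PosSemidef.eigenvalues_le_trace (hA : A.PosSemidef) (i : n) :
    hA.1.eigenvalues i ≤ A.trace := by
  rw [hA.1.trace_eq_sum_eigenvalues]
  exact Finset.single_le_sum (fun j _ => hA.eigenvalues_nonneg j) (Finset.mem_univ i)

theorem IsHermitian.le_eigenvalues_of_le_quadForm (hA : A.IsHermitian) {L : ℝ}
    (hL : ∀ v : n → ℝ, L * ∑ j, v j ^ 2 ≤ ∑ j, ∑ k, v j * v k * A j k) (i : n) :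
    L ≤ hA.eigenvalues i := by
  set v := hA.eigenvectorBasis i
  have hnorm : ∑ j, v j ^ 2 = 1 := by
    have hv : ‖v‖ = 1 := hA.eigenvectorBasis.orthonormal.1 i
    rw [EuclideanSpace.norm_eq, Real.sqrt_eq_one] at hv
    simpa only [Real.norm_eq_abs, sq_abs] using hv
  have hquad : ∑ j, ∑ k, v j * v k * A j k = hA.eigenvalues i := by
    rw [hA.eigenvalues_eq i]
    simp only [dotProduct, mulVec, Finset.mul_sum, star_trivial, RCLike.re_to_real]
    exact Finset.sum_congr rfl fun j _ => Finset.sum_congr rfl fun k _ => by ring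
  simpa [hnorm, hquad] using hL v

theorem PosDef.sup'_eigenvalues_div_inf'_le (hA : A.PosDef)
    (hne : (Finset.univ : Finset n).Nonempty) {d L : ℝ} (hL : 0 < L) (hdiag : ∀ j, A j j ≤ d)
    (hquad : ∀ v : n → ℝ, L * ∑ j, v j ^ 2 ≤ ∑ j, ∑ k, v j * v k * A j k) :
    Finset.univ.sup' hne hA.1.eigenvalues / Finset.univ.inf' hne hA.1.eigenvalues ≤
      Fintype.card n * d / L := by
  have htrace : A.trace ≤ Fintype.card n * d := by
    simpa [trace] using Finset.sum_le_sum fun j (_ : j ∈ Finset.univ) => hdiag j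
  have hsup : Finset.univ.sup' hne hA.1.eigenvalues ≤ Fintype.card n * d :=
    Finset.sup'_le _ _ fun i _ => (hA.posSemidef.eigenvalues_le_trace i).trans htrace
  have hinf : L ≤ Finset.univ.inf' hne hA.1.eigenvalues :=
    Finset.le_inf' _ _ fun i _ => hA.1.le_eigenvalues_of_le_quadForm hquad i
  obtain ⟨i, -⟩ := id hne
  have hd : 0 ≤ Fintype.card n * d :=
    (hA.eigenvalues_pos i).le.trans ((Finset.le_sup' _ (Finset.mem_univ i)).trans hsup)
  exact div_le_div₀ hd hsup hL hinf

end Matrix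

theorem integrable_one_add_sq_rpow_neg {τ : ℝ} (hτ : 1 / 2 < τ) :
    Integrable fun ξ : ℝ => (1 + ξ ^ 2) ^ (-τ) := by
  have h := integrable_rpow_neg_one_add_norm_sq (E := ℝ) (μ := volume) (r := 2 * τ)
    (by simp only [Module.finrank_self, Nat.cast_one]; linarith)
  convert h using 3 with ξ
  rw [Real.norm_eq_abs, sq_abs]
  ring_nf

theorem integral_one_add_sq_rpow_neg_pos {τ : ℝ} (hτ : 1 / 2 < τ) :
    0 < ∫ ξ : ℝ, (1 + ξ ^ 2) ^ (-τ) := by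
  rw [integral_pos_iff_support_of_nonneg (fun ξ => by positivity)
    (integrable_one_add_sq_rpow_neg hτ)]
  have : Function.support (fun ξ : ℝ => (1 + ξ ^ 2) ^ (-τ)) = Set.univ :=
    Set.eq_univ_of_forall fun ξ => (by positivity : (0 : ℝ) < _).ne'
  simp [this]

theorem intervalIntegral_le_integral_of_le {f g : ℝ → ℝ} {a b : ℝ} (hab : a ≤ b)
    (hf : ∀ x, 0 ≤ f x) (hfg : ∀ x, f x ≤ g x) (hg : Integrable g) :
    ∫ x in a..b, f x ≤ ∫ x, g x := by
  rw [intervalIntegral.integral_of_le hab]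
  calc ∫ x in Set.Ioc a b, f x ≤ ∫ x in Set.Ioc a b, g x :=
        integral_mono_of_nonneg (ae_of_all _ hf) hg.integrableOn (ae_of_all _ hfg)
    _ ≤ ∫ x, g x := setIntegral_le_integral hg (ae_of_all _ fun x => (hf x).trans (hfg x))

theorem one_add_div_sq_rpow_le {a q Q τ : ℝ} (hq : 0 < q) (hqQ : q ≤ Q) (hτ : 0 ≤ τ) :
    (1 + (a / q) ^ 2) ^ τ ≤ (Q ^ 2 + a ^ 2) ^ τ * q ^ (-(2 * τ)) := by
  have hsq : 1 + (a / q) ^ 2 ≤ (Q ^ 2 + a ^ 2) * (q ^ 2)⁻¹ := by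
    rw [div_pow, ← div_eq_mul_inv, le_div_iff₀ (by positivity), add_mul,
      div_mul_cancel₀ _ (by positivity)]
    nlinarith
  calc (1 + (a / q) ^ 2) ^ τ ≤ ((Q ^ 2 + a ^ 2) * (q ^ 2)⁻¹) ^ τ := by gcongr
    _ = (Q ^ 2 + a ^ 2) ^ τ * q ^ (-(2 * τ)) := by
      rw [mul_rpow (by positivity) (by positivity), inv_rpow (by positivity),
        ← rpow_neg (by positivity), ← rpow_natCast q 2, ← rpow_mul hq.le]
      norm_num

theorem le_div_and_le_div_mul_of_le_mul_inv {N C h c q : ℝ} (hN : 1 ≤ N) (hNh : N ≤ C * h⁻¹)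
    (hc : 0 < c) (hq : 0 < q) (hqh : c * q ≤ h) : q ≤ C / c ∧ N ≤ C / (c * q) := by
  have hh : 0 < h := (mul_pos hc hq).trans_le hqh
  have hhC : h ≤ C := by
    have := hN.trans hNh
    rwa [← div_eq_mul_inv, one_le_div hh] at this
  refine ⟨by rw [le_div_iff₀ hc]; linarith, hNh.trans ?_⟩
  rw [← div_eq_mul_inv]
  gcongr
  exact hh.le.trans hhC

/-- The kernel `Φ_σ = Φ * η_σ`, written through its Fourier transform `Φ̂ · 1_{[-σ, σ]}`. -/
noncomputable def bandLimitedKernel (Phat : ℝ → ℝ) (σ t : ℝ) : ℂ :=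
  1 / (2 * (π : ℂ)) * ∫ ξ in -σ..σ, (Phat ξ : ℂ) * Complex.exp (Complex.I * ξ * t)

theorem bandLimitedKernel_zero (Phat : ℝ → ℝ) (σ : ℝ) :
    bandLimitedKernel Phat σ 0 = ((2 * π)⁻¹ * ∫ ξ in -σ..σ, Phat ξ : ℝ) := by
  simp only [bandLimitedKernel, Complex.ofReal_zero, mul_zero, Complex.exp_zero, mul_one,
    intervalIntegral.integral_ofReal]
  push_cast
  ring

theorem le_of_ofReal_eq_bandLimitedKernel_zero {Phat g : ℝ → ℝ} {σ Φ₀ : ℝ} (hσ : 0 ≤ σ)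
    (hΦ₀ : (Φ₀ : ℂ) = bandLimitedKernel Phat σ 0) (hPhat : ∀ ξ, 0 ≤ Phat ξ)
    (hle : ∀ ξ, Phat ξ ≤ g ξ) (hg : Integrable g) : Φ₀ ≤ (2 * π)⁻¹ * ∫ ξ, g ξ := by
  rw [bandLimitedKernel_zero, Complex.ofReal_inj] at hΦ₀
  rw [hΦ₀]
  gcongr
  exact intervalIntegral_le_integral_of_le (neg_le_self hσ) hPhat hle hg

theorem stmt_10_general (Phat : ℝ → ℝ) (τ c₁ c₂ : ℝ) (hτ : 1 / 2 < τ)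
    (hc₁ : 0 < c₁) (hc₁₂ : c₁ ≤ c₂)
    (hlow : ∀ ξ : ℝ, c₁ * (1 + ξ ^ 2) ^ (-τ) ≤ Phat ξ)
    (hup : ∀ ξ : ℝ, Phat ξ ≤ c₂ * (1 + ξ ^ 2) ^ (-τ))
    (C c₃ c₄ : ℝ) (hC : 0 < C) (hc₃ : 0 < c₃) :
    ∃ c > 0, ∀ (N : ℕ) (hN : 0 < N) (x : Fin N → ℝ) (q h : ℝ), 0 < q →
      (∀ j k, j ≠ k → 2 * q ≤ |x j - x k|) →
      (N : ℝ) ≤ C * h⁻¹ → c₃ * q ≤ h → h ≤ c₄ * q →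
      ∀ (Φσ : ℝ → ℝ) (A : Matrix (Fin N) (Fin N) ℝ),
        (∀ t : ℝ, (Φσ t : ℂ) = (1 / (2 * (π : ℂ))) *
            ∫ ξ in (-(2 * π / q))..(2 * π / q), (Phat ξ : ℂ) * Complex.exp (Complex.I * ξ * t)) →
        (∀ j k, A j k = Φσ (x j - x k)) →
        (∀ lam : Fin N → ℝ,
          q⁻¹ * Phat (2 * π / q) * ∑ j, (lam j) ^ 2 ≤ ∑ j, ∑ k, lam j * lam k * A j k) →
        ∀ hA : A.PosDef,
          (Finset.univ.sup' (Finset.univ_nonempty_iff.mpr (Fin.pos_iff_nonempty.mp hN))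
              hA.1.eigenvalues) /
          (Finset.univ.inf' (Finset.univ_nonempty_iff.mpr (Fin.pos_iff_nonempty.mp hN))
              hA.1.eigenvalues)
            ≤ c * q ^ (-(2 * τ)) := by
  set g : ℝ → ℝ := fun ξ => (1 + ξ ^ 2) ^ (-τ)
  set K := ∫ ξ, g ξ
  have hK : 0 < K := integral_one_add_sq_rpow_neg_pos hτ
  have hc₂ : 0 < c₂ := hc₁.trans_le hc₁₂
  refine ⟨C * c₂ * K / (2 * π * c₃ * c₁) * ((C / c₃) ^ 2 + (2 * π) ^ 2) ^ τ, by positivity, ?_⟩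
  intro N hN x q h hq _ hNh hqh _ Φσ A hΦ hAΦ hquad hA
  set σ := 2 * π / q
  obtain ⟨hqC, hNq⟩ := le_div_and_le_div_mul_of_le_mul_inv (Nat.one_le_cast.mpr hN) hNh hc₃ hq hqh
  have hdiag : ∀ j, A j j ≤ (2 * π)⁻¹ * (c₂ * K) := fun j => by
    rw [hAΦ, sub_self, ← integral_const_mul]
    exact le_of_ofReal_eq_bandLimitedKernel_zero (by positivity) (hΦ 0)
      (fun ξ => (by positivity : 0 ≤ c₁ * g ξ).trans (hlow ξ)) hup
      ((integrable_one_add_sq_rpow_neg hτ).const_mul c₂)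
  have hquad' : ∀ v : Fin N → ℝ,
      q⁻¹ * (c₁ * g σ) * ∑ j, v j ^ 2 ≤ ∑ j, ∑ k, v j * v k * A j k := fun v =>
    le_trans (by gcongr; exact hlow σ) (hquad v)
  calc _ ≤ N * ((2 * π)⁻¹ * (c₂ * K)) / (q⁻¹ * (c₁ * g σ)) := by
        simpa using hA.sup'_eigenvalues_div_inf'_le _ (by positivity) hdiag hquad'
    _ ≤ C / (c₃ * q) * ((2 * π)⁻¹ * (c₂ * K)) / (q⁻¹ * (c₁ * g σ)) := by gcongr
    _ = C * c₂ * K / (2 * π * c₃ * c₁) * (1 + σ ^ 2) ^ τ := by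
        simp only [g, rpow_neg (by positivity : (0 : ℝ) ≤ 1 + σ ^ 2)]
        field_simp
    _ ≤ C * c₂ * K / (2 * π * c₃ * c₁) * (((C / c₃) ^ 2 + (2 * π) ^ 2) ^ τ * q ^ (-(2 * τ))) := by
        gcongr
        exact one_add_div_sq_rpow_le hq hqC (by linarith)
    _ = _ := by ring

theorem stmt_10 (Phat : ℝ → ℝ) (τ c₁ c₂ : ℝ) (hτ : 1 / 2 < τ)
    (hc₁ : 0 < c₁) (hc₁₂ : c₁ ≤ c₂)
    (hlow : ∀ ξ : ℝ, c₁ * (1 + ξ ^ 2) ^ (-τ) ≤ Phat ξ)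
    (hup : ∀ ξ : ℝ, Phat ξ ≤ c₂ * (1 + ξ ^ 2) ^ (-τ))
    (C c₃ c₄ : ℝ) (hC : 0 < C) (hc₃ : 0 < c₃) (hc₄ : 0 < c₄) :
    ∃ c > 0, ∀ (N : ℕ) (hN : 0 < N) (x : Fin N → ℝ) (q h : ℝ), 0 < q →
      (∀ j k, j ≠ k → 2 * q ≤ |x j - x k|) →
      (N : ℝ) ≤ C * h⁻¹ → c₃ * q ≤ h → h ≤ c₄ * q →
      ∀ (Φσ : ℝ → ℝ) (A : Matrix (Fin N) (Fin N) ℝ),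
        (∀ t : ℝ, (Φσ t : ℂ) = (1 / (2 * (π : ℂ))) *
            ∫ ξ in (-(2 * π / q))..(2 * π / q), (Phat ξ : ℂ) * Complex.exp (Complex.I * ξ * t)) →
        (∀ j k, A j k = Φσ (x j - x k)) →
        (∀ lam : Fin N → ℝ,
          q⁻¹ * Phat (2 * π / q) * ∑ j, (lam j) ^ 2 ≤ ∑ j, ∑ k, lam j * lam k * A j k) →
        ∀ hA : A.PosDef,
          (Finset.univ.sup' (Finset.univ_nonempty_iff.mpr (Fin.pos_iff_nonempty.mp hN))
              hA.1.eigenvalues) /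
          (Finset.univ.inf' (Finset.univ_nonempty_iff.mpr (Fin.pos_iff_nonempty.mp hN))
              hA.1.eigenvalues)
            ≤ c * q ^ (-(2 * τ)) :=
  stmt_10_general Phat τ c₁ c₂ hτ hc₁ hc₁₂ hlow hup C c₃ c₄ hC hc₃
end
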